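/- arXiv:1711.06730 — 3 statements merged into one kernel-verified Lean document; each statement's English description precedes it below -/
import Mathlib

section
/- Let u : ℝ^n → ℝ be a nontrivial C^1 function, periodic with respect to Ω = [-π,π]^n, with gradient also periodic and square-integrable on Ω. Let ε > 0 and suppose λ > (∫_Ω |∇u|^2 dy)/(∫_Ω u^2 dy). Then there exists x ∈ ℝ^n such that λ ∫_{ℝ^n} u(x+y)^2 G_0(y,ε) dy > ∫_{ℝ^n} |∇u(x+y)|^2 G_0(y,ε) dy, where G_0(y,ε) = ε^{-n/2} e^{-|y|^2/(4ε)}. -/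
/-!
If `λ ∫ u(x+y)² G(y) dy ≤ ∫ |∇u(x+y)|² G(y) dy` held for every `x`, integrate in `x` over the
period cube. For a periodic `f`, Fubini and the translation invariance of integrals over a
fundamental domain give `∫_Ω ∫ f(x+y) G(y) dy dx = (∫_Ω f) (∫ G)`, so the averaged inequality
reads `λ (∫_Ω u²)(∫ G) ≤ (∫_Ω |∇u|²)(∫ G)`. Since `∫ G > 0` and `∫_Ω u² > 0`, this contradicts
the choice of `λ`.
-/

open MeasureTheory Real Set Function Pointwise

variable {E : Type*} [AddCommGroup E] [MeasurableSpace E] [MeasurableAdd₂ E] {μ : Measure E}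
  {s : Set E}

theorem integrable_restrict_prod_add_mul [SFinite μ] (hsμ : μ s ≠ ⊤) {f : E → ℝ}
    (hf : Measurable f) {C : ℝ} (hC : ∀ x, |f x| ≤ C) {G : E → ℝ} (hG : Integrable G μ) :
    Integrable (fun p : E × E => f (p.1 + p.2) * G p.2) ((μ.restrict s).prod μ) := by
  refine Integrable.mono' ((integrableOn_const (C := C) hsμ).mul_prod hG.abs)
    ((hf.comp measurable_add).aestronglyMeasurable.mul hG.aestronglyMeasurable.comp_snd)
    (ae_of_all _ fun p => ?_)
  rw [norm_mul, Real.norm_eq_abs, Real.norm_eq_abs]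
  exact mul_le_mul_of_nonneg_right (hC _) (abs_nonneg _)

namespace MeasureTheory.IsAddFundamentalDomain

variable [μ.IsAddLeftInvariant] {L : AddSubgroup E} [Countable L]

theorem setIntegral_add_right (hs : IsAddFundamentalDomain L s μ) {f : E → ℝ}
    (hf : ∀ (g : L) x, f (g + x) = f x) (y : E) :
    ∫ x in s, f (x + y) ∂μ = ∫ x in s, f x ∂μ := by
  calc ∫ x in s, f (x + y) ∂μ = ∫ x in y +ᵥ s, f x ∂μ := by
        simp_rw [add_comm _ y]
        exact (measurePreserving_add_left μ y).setIntegral_image_emb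
          (measurableEmbedding_addLeft y) f s |>.symm
    _ = ∫ x in s, f x ∂μ := (hs.vadd_of_comm y).setIntegral_eq hs hf

theorem setIntegral_integral_add_mul [SFinite μ] (hs : IsAddFundamentalDomain L s μ)
    (hsμ : μ s ≠ ⊤) {f : E → ℝ} (hf : Measurable f) {C : ℝ} (hC : ∀ x, |f x| ≤ C)
    (hper : ∀ (g : L) x, f (g + x) = f x) {G : E → ℝ} (hG : Integrable G μ) :
    ∫ x in s, ∫ y, f (x + y) * G y ∂μ ∂μ = (∫ x in s, f x ∂μ) * ∫ y, G y ∂μ := by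
  calc ∫ x in s, ∫ y, f (x + y) * G y ∂μ ∂μ = ∫ y, (∫ x in s, f (x + y) ∂μ) * G y ∂μ := by
        rw [integral_integral_swap (integrable_restrict_prod_add_mul hsμ hf hC hG)]
        simp_rw [integral_mul_const]
    _ = (∫ x in s, f x ∂μ) * ∫ y, G y ∂μ := by
        simp_rw [hs.setIntegral_add_right hper, integral_const_mul]

theorem exists_integral_add_mul_lt [SFinite μ] (hs : IsAddFundamentalDomain L s μ)
    (hsμ : μ s ≠ ⊤) {f₁ f₂ : E → ℝ} (hf₁ : Measurable f₁) (hf₂ : Measurable f₂) {C₁ C₂ : ℝ}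
    (hC₁ : ∀ x, |f₁ x| ≤ C₁) (hC₂ : ∀ x, |f₂ x| ≤ C₂)
    (hper₁ : ∀ (g : L) x, f₁ (g + x) = f₁ x) (hper₂ : ∀ (g : L) x, f₂ (g + x) = f₂ x)
    (hpos : 0 < ∫ x in s, f₁ x ∂μ) {G : E → ℝ} (hG : Integrable G μ)
    (hGpos : 0 < ∫ y, G y ∂μ) {lam : ℝ}
    (hlam : (∫ x in s, f₂ x ∂μ) / (∫ x in s, f₁ x ∂μ) < lam) :
    ∃ x, ∫ y, f₂ (x + y) * G y ∂μ < lam * ∫ y, f₁ (x + y) * G y ∂μ := by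
  by_contra! h
  have hmono := integral_mono
    ((integrable_restrict_prod_add_mul hsμ hf₁ hC₁ hG).integral_prod_left.const_mul lam)
    (integrable_restrict_prod_add_mul hsμ hf₂ hC₂ hG).integral_prod_left h
  rw [integral_const_mul, hs.setIntegral_integral_add_mul hsμ hf₁ hC₁ hper₁ hG,
    hs.setIntegral_integral_add_mul hsμ hf₂ hC₂ hper₂ hG, ← mul_assoc] at hmono
  rw [div_lt_iff₀ hpos] at hlam
  exact hlam.not_ge (le_of_mul_le_mul_right hmono hGpos)

theorem setIntegral_pos [TopologicalSpace E] [μ.IsOpenPosMeasure]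
    (hs : IsAddFundamentalDomain L s μ) {f : E → ℝ} (hf : Continuous f) (hf₀ : 0 ≤ f)
    (hne : ∃ x, f x ≠ 0) (hint : IntegrableOn f s μ) (hper : ∀ (g : L) x, f (g + x) = f x) :
    0 < ∫ x in s, f x ∂μ := by
  rw [setIntegral_pos_iff_support_of_nonneg_ae (ae_of_all _ hf₀) hint]
  refine pos_iff_ne_zero.2 fun h => hf.isOpen_support.measure_ne_zero μ hne ?_
  refine hs.measure_zero_of_invariant _ (fun g => ?_) h
  ext x
  rw [mem_vadd_set_iff_neg_vadd_mem, mem_support, mem_support, AddSubgroup.vadd_def, vadd_eq_add,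
    hper]

end MeasureTheory.IsAddFundamentalDomain

noncomputable def periodLatticeHom (n : ℕ) : (Fin n → ℤ) →+ EuclideanSpace ℝ (Fin n) where
  toFun k := (WithLp.equiv 2 (Fin n → ℝ)).symm fun i => 2 * π * (k i : ℝ)
  map_zero' := by ext i; simp
  map_add' k l := by ext i; simp [mul_add]

noncomputable def periodLattice (n : ℕ) : AddSubgroup (EuclideanSpace ℝ (Fin n)) :=
  (periodLatticeHom n).range

instance (n : ℕ) : Countable (periodLattice n) := (countable_range _).to_subtype

def cubeIco (n : ℕ) : Set (EuclideanSpace ℝ (Fin n)) :=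
  WithLp.ofLp ⁻¹' univ.pi fun _ => Ico (-π) π

def cubeIcc (n : ℕ) : Set (EuclideanSpace ℝ (Fin n)) :=
  WithLp.ofLp ⁻¹' univ.pi fun _ => Icc (-π) π

section Cube

variable {n : ℕ}

theorem add_periodLattice_eq {α : Type*} {f : EuclideanSpace ℝ (Fin n) → α}
    (hf : ∀ x k, f (x + periodLatticeHom n k) = f x) (g : periodLattice n)
    (x : EuclideanSpace ℝ (Fin n)) :
    f (g + x) = f x := by
  obtain ⟨_, k, rfl⟩ := g
  rw [add_comm]
  exact hf x k

theorem periodLatticeHom_add_mem_cubeIco_iff (k : Fin n → ℤ) (x : EuclideanSpace ℝ (Fin n)) :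
    periodLatticeHom n k + x ∈ cubeIco n ↔ ∀ i, -k i = toIcoDiv two_pi_pos (-π) (x i) := by
  simp only [cubeIco, mem_preimage, mem_univ_pi]
  refine forall_congr' fun i => ?_
  rw [eq_comm, toIcoDiv_eq_iff, show -π + 2 * π = π by ring, zsmul_eq_mul]
  simp only [periodLatticeHom, WithLp.equiv_symm_apply, AddMonoidHom.coe_mk, ZeroHom.coe_mk,
    PiLp.add_apply, mem_Ico, Int.cast_neg, neg_mul, sub_neg_eq_add]
  ring_nf

theorem exists_periodLattice_add_mem_cubeIco (x : EuclideanSpace ℝ (Fin n)) :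
    ∃ g : periodLattice n, ↑g + x ∈ cubeIco n :=
  ⟨⟨_, _, rfl⟩, (periodLatticeHom_add_mem_cubeIco_iff _ x).2 fun _ => neg_neg _⟩

theorem isAddFundamentalDomain_cubeIco (n : ℕ) :
    IsAddFundamentalDomain (periodLattice n) (cubeIco n) := by
  refine .mk' ?_ fun x => existsUnique_of_exists_of_unique
    (exists_periodLattice_add_mem_cubeIco x) ?_
  · exact ((MeasurableSet.univ_pi fun _ => measurableSet_Ico).preimage
      (WithLp.measurable_ofLp 2 _)).nullMeasurableSet
  rintro ⟨_, k, rfl⟩ ⟨_, l, rfl⟩ hk hl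
  obtain rfl : k = l := funext fun i => neg_injective <|
    ((periodLatticeHom_add_mem_cubeIco_iff k x).1 hk i).trans
      ((periodLatticeHom_add_mem_cubeIco_iff l x).1 hl i).symm
  rfl

theorem cubeIco_subset_cubeIcc : cubeIco n ⊆ cubeIcc n :=
  preimage_mono <| pi_mono fun _ _ => Ico_subset_Icc_self

theorem isCompact_cubeIcc : IsCompact (cubeIcc n) :=
  (PiLp.homeomorph 2 _).isCompact_preimage.2 (isCompact_univ_pi fun _ => isCompact_Icc)

theorem volume_cubeIco_ne_top : volume (cubeIco n) ≠ ⊤ :=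
  (measure_mono cubeIco_subset_cubeIcc |>.trans_lt isCompact_cubeIcc.measure_lt_top).ne

theorem setIntegral_cubeIcc_eq (f : EuclideanSpace ℝ (Fin n) → ℝ) :
    ∫ y in {y : EuclideanSpace ℝ (Fin n) | ∀ i, -π ≤ y i ∧ y i ≤ π}, f y
      = ∫ y in cubeIco n, f y := by
  have hIcc : {y : EuclideanSpace ℝ (Fin n) | ∀ i, -π ≤ y i ∧ y i ≤ π} = cubeIcc n := by
    ext; simp only [cubeIcc, mem_preimage, mem_univ_pi, mem_Icc, mem_ofPred_eq]
  rw [hIcc]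
  exact setIntegral_congr_set ((PiLp.volume_preserving_ofLp _).quasiMeasurePreserving
    |>.preimage_ae_eq Measure.pi_Ico_ae_eq_pi_Icc).symm

variable {f : EuclideanSpace ℝ (Fin n) → ℝ} (hf : Continuous f)
  (hper : ∀ (g : periodLattice n) x, f (g + x) = f x)
include hf hper

theorem exists_abs_le_of_periodLattice : ∃ C, ∀ x, |f x| ≤ C := by
  obtain ⟨C, hC⟩ := isCompact_cubeIcc.exists_bound_of_continuousOn hf.continuousOn
  refine ⟨C, fun x => ?_⟩
  obtain ⟨g, hg⟩ := exists_periodLattice_add_mem_cubeIco x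
  rw [← hper g x, ← Real.norm_eq_abs]
  exact hC _ (cubeIco_subset_cubeIcc hg)

theorem setIntegral_cubeIco_pos (hf₀ : 0 ≤ f) (hne : ∃ x, f x ≠ 0) :
    0 < ∫ x in cubeIco n, f x :=
  (isAddFundamentalDomain_cubeIco n).setIntegral_pos hf hf₀ hne
    ((hf.continuousOn.integrableOn_compact isCompact_cubeIcc).mono_set cubeIco_subset_cubeIcc)
    hper

end Cube

theorem integral_rpow_mul_exp_neg_sq_norm_div_pos (n : ℕ) {ε : ℝ} (hε : 0 < ε) :
    0 < ∫ y : EuclideanSpace ℝ (Fin n), ε ^ (-(n : ℝ) / 2) * exp (-‖y‖ ^ 2 / (4 * ε)) := by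
  have hexp : ∀ y : EuclideanSpace ℝ (Fin n), -‖y‖ ^ 2 / (4 * ε) = -(1 / (4 * ε)) * ‖y‖ ^ 2 :=
    fun y => by ring
  simp_rw [hexp, integral_const_mul,
    GaussianFourier.integral_rexp_neg_mul_sq_norm (by positivity : 0 < 1 / (4 * ε))]
  positivity

theorem stmt_2_general (n : ℕ) (u : EuclideanSpace ℝ (Fin n) → ℝ)
    (hu : ContDiff ℝ 1 u) (hnz : ∃ x, u x ≠ 0)
    (hper : ∀ (x : EuclideanSpace ℝ (Fin n)) (k : Fin n → ℤ),
      u (x + (WithLp.equiv 2 (Fin n → ℝ)).symm (fun i => 2 * π * (k i : ℝ))) = u x)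
    (hgradper : ∀ (x : EuclideanSpace ℝ (Fin n)) (k : Fin n → ℤ),
      gradient u (x + (WithLp.equiv 2 (Fin n → ℝ)).symm (fun i => 2 * π * (k i : ℝ)))
        = gradient u x)
    (ε : ℝ) (hε : 0 < ε) (lam : ℝ)
    (hlam : lam > (∫ y in {y : EuclideanSpace ℝ (Fin n) | ∀ i, -π ≤ y i ∧ y i ≤ π},
        ‖gradient u y‖ ^ 2) /
      (∫ y in {y : EuclideanSpace ℝ (Fin n) | ∀ i, -π ≤ y i ∧ y i ≤ π}, u y ^ 2)) :
    ∃ x : EuclideanSpace ℝ (Fin n),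
      lam * ∫ y : EuclideanSpace ℝ (Fin n),
          u (x + y) ^ 2 * (ε ^ (-(n : ℝ) / 2) * Real.exp (-‖y‖ ^ 2 / (4 * ε)))
      > ∫ y : EuclideanSpace ℝ (Fin n),
          ‖gradient u (x + y)‖ ^ 2 * (ε ^ (-(n : ℝ) / 2) * Real.exp (-‖y‖ ^ 2 / (4 * ε))) := by
  have hu₁ : Continuous fun x => u x ^ 2 := hu.continuous.pow 2
  have hu₂ : Continuous fun x => ‖gradient u x‖ ^ 2 :=
    ((InnerProductSpace.toDual ℝ _).symm.continuous.comp
      (hu.continuous_fderiv one_ne_zero)).norm.pow 2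
  have hper₁ : ∀ (g : periodLattice n) x, u (g + x) ^ 2 = u x ^ 2 := fun g x => by
    rw [add_periodLattice_eq hper]
  have hper₂ : ∀ (g : periodLattice n) x, ‖gradient u (g + x)‖ ^ 2 = ‖gradient u x‖ ^ 2 :=
    fun g x => by rw [add_periodLattice_eq hgradper]
  obtain ⟨C₁, hC₁⟩ := exists_abs_le_of_periodLattice hu₁ hper₁
  obtain ⟨C₂, hC₂⟩ := exists_abs_le_of_periodLattice hu₂ hper₂
  have hpos := setIntegral_cubeIco_pos hu₁ hper₁ (fun x => sq_nonneg (u x))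
    (hnz.imp fun _ => pow_ne_zero 2)
  have hG := integral_rpow_mul_exp_neg_sq_norm_div_pos n hε
  rw [setIntegral_cubeIcc_eq, setIntegral_cubeIcc_eq] at hlam
  exact (isAddFundamentalDomain_cubeIco n).exists_integral_add_mul_lt volume_cubeIco_ne_top
    hu₁.measurable hu₂.measurable hC₁ hC₂ hper₁ hper₂ hpos (.of_integral_ne_zero hG.ne') hG hlam

theorem stmt_2 (n : ℕ) (hn : 1 ≤ n) (u : EuclideanSpace ℝ (Fin n) → ℝ)
    (hu : ContDiff ℝ 1 u) (hnz : ∃ x, u x ≠ 0)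
    (hper : ∀ (x : EuclideanSpace ℝ (Fin n)) (k : Fin n → ℤ),
      u (x + (WithLp.equiv 2 (Fin n → ℝ)).symm (fun i => 2 * π * (k i : ℝ))) = u x)
    (hgradper : ∀ (x : EuclideanSpace ℝ (Fin n)) (k : Fin n → ℤ),
      gradient u (x + (WithLp.equiv 2 (Fin n → ℝ)).symm (fun i => 2 * π * (k i : ℝ)))
        = gradient u x)
    (hgradL2 : IntegrableOn (fun y => ‖gradient u y‖ ^ 2)
      {y : EuclideanSpace ℝ (Fin n) | ∀ i, -π ≤ y i ∧ y i ≤ π})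
    (ε : ℝ) (hε : 0 < ε) (lam : ℝ)
    (hlam : lam > (∫ y in {y : EuclideanSpace ℝ (Fin n) | ∀ i, -π ≤ y i ∧ y i ≤ π},
        ‖gradient u y‖ ^ 2) /
      (∫ y in {y : EuclideanSpace ℝ (Fin n) | ∀ i, -π ≤ y i ∧ y i ≤ π}, u y ^ 2)) :
    ∃ x : EuclideanSpace ℝ (Fin n),
      lam * ∫ y : EuclideanSpace ℝ (Fin n),
          u (x + y) ^ 2 * (ε ^ (-(n : ℝ) / 2) * Real.exp (-‖y‖ ^ 2 / (4 * ε)))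
      > ∫ y : EuclideanSpace ℝ (Fin n),
          ‖gradient u (x + y)‖ ^ 2 * (ε ^ (-(n : ℝ) / 2) * Real.exp (-‖y‖ ^ 2 / (4 * ε))) :=
  stmt_2_general n u hu hnz hper hgradper ε hε lam hlam
end

section
/- Let q : [τ_0, ∞) → ℝ be continuously differentiable and suppose that along [τ_0, ∞), q'(τ) ≤ a e^{-τ} max(q(τ),0) + b e^{-τ/2} (max(q(τ),0))^{1/2} + g(τ), where a, b ≥ 0, a e^{-τ_0} ≤ 1/2, and g ≥ 0 is integrable on [τ_0, ∞). Then q is bounded above on [τ_0, ∞) by a constant depending only on max(q(τ_0), 0), a, b, e^{-τ_0}, and ∫_{τ_0}^∞ g. -/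
/-!
A bootstrap argument. As long as `q ≤ B` on `[τ₀, t)`, the right-hand side is at most
`a B e^{-τ} + b √B e^{-τ/2} + g(τ)`, so integrating from `τ₀` gives
`q t ≤ M + a e^{-τ₀} B + 2 c √B + G ≤ M + B/2 + (B/4 + 4 c²) + G` with `c = b e^{-τ₀/2}`
(AM-GM for the square root term). For `B = 4 (M + 4 c² + G) + 1` this is `q t ≤ B - 1/4`,
so by continuity `q` never reaches `B`.
-/

open MeasureTheory Real Set

theorem ContinuousOn.bootstrap_lt {q : ℝ → ℝ} {τ₀ B : ℝ} (hq : ContinuousOn q (Ici τ₀))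
    (hstep : ∀ t ∈ Ici τ₀, (∀ s ∈ Ico τ₀ t, q s < B) → q t < B) :
    ∀ t ∈ Ici τ₀, q t < B := by
  intro T hT
  by_contra! hBT
  set S := Icc τ₀ T ∩ q ⁻¹' Ici B
  have hS : IsClosed S :=
    (hq.mono Icc_subset_Ici_self).preimage_isClosed_of_isClosed isClosed_Icc isClosed_Ici
  have hbdd : BddBelow S := ⟨τ₀, fun t ht => ht.1.1⟩
  have hmem : sInf S ∈ S := hS.csInf_mem ⟨T, ⟨hT, le_rfl⟩, hBT⟩ hbdd
  refine (hstep (sInf S) hmem.1.1 fun s hs => ?_).not_ge hmem.2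
  by_contra! hBs
  exact hs.2.not_ge (csInf_le hbdd ⟨⟨hs.1, hs.2.le.trans hmem.1.2⟩, hBs⟩)

theorem sub_le_setIntegral_Ici_of_deriv_le {f f' g : ℝ → ℝ} {a b : ℝ} (hab : a ≤ b)
    (hf : ∀ x ∈ Icc a b, HasDerivAt f (f' x) x) (hg0 : ∀ x ∈ Ici a, 0 ≤ g x)
    (hg : IntegrableOn g (Ici a)) (hle : ∀ x ∈ Ioo a b, f' x ≤ g x) :
    f b - f a ≤ ∫ x in Ici a, g x := by
  calc f b - f a ≤ ∫ x in a..b, g x :=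
        intervalIntegral.sub_le_integral_of_hasDeriv_right_of_le hab
          (fun x hx => (hf x hx).continuousAt.continuousWithinAt)
          (fun x hx => (hf x (Ioo_subset_Icc_self hx)).hasDerivWithinAt)
          (hg.mono_set Icc_subset_Ici_self) hle
    _ = ∫ x in Icc a b, g x := by
        rw [intervalIntegral.integral_of_le hab, integral_Icc_eq_integral_Ioc]
    _ ≤ ∫ x in Ici a, g x :=
        setIntegral_mono_set hg (ae_restrict_of_forall_mem measurableSet_Ici hg0)
          Icc_subset_Ici_self.eventuallyLE

theorem hasDerivAt_neg_exp_neg_sub_exp_neg_half (α β x : ℝ) :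
    HasDerivAt (fun s => -α * exp (-s) - 2 * β * exp (-s / 2))
      (α * exp (-x) + β * exp (-x / 2)) x := by
  have h₁ := ((hasDerivAt_neg x).exp).const_mul (-α)
  have h₂ := (((hasDerivAt_neg x).div_const 2).exp).const_mul (2 * β)
  exact (h₁.sub h₂).congr_deriv (by ring)

theorem le_of_deriv_le_of_le_on_Ico {a b τ₀ B t : ℝ} {q q' g : ℝ → ℝ} (ha : 0 ≤ a) (hb : 0 ≤ b)
    (hB : 0 ≤ B) (ht : τ₀ ≤ t) (hq : ∀ τ ∈ Icc τ₀ t, HasDerivAt q (q' τ) τ)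
    (hg0 : ∀ τ ∈ Ici τ₀, 0 ≤ g τ) (hg : IntegrableOn g (Ici τ₀))
    (hqB : ∀ τ ∈ Ico τ₀ t, q τ ≤ B)
    (hq' : ∀ τ ∈ Ioo τ₀ t,
      q' τ ≤ a * exp (-τ) * max (q τ) 0 + b * exp (-τ / 2) * √(max (q τ) 0) + g τ) :
    q t ≤ q τ₀ + a * exp (-τ₀) * B + 2 * b * exp (-τ₀ / 2) * √B + ∫ τ in Ici τ₀, g τ := by
  set H : ℝ → ℝ := fun s => -(a * B) * exp (-s) - 2 * (b * √B) * exp (-s / 2)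
  have hcmp : (q t - H t) - (q τ₀ - H τ₀) ≤ ∫ τ in Ici τ₀, g τ := by
    refine sub_le_setIntegral_Ici_of_deriv_le ht
      (fun τ hτ => (hq τ hτ).sub (hasDerivAt_neg_exp_neg_sub_exp_neg_half _ _ τ)) hg0 hg
      fun τ hτ => ?_
    have hmax : max (q τ) 0 ≤ B := max_le (hqB τ (Ioo_subset_Ico_self hτ)) hB
    have h₁ : a * exp (-τ) * max (q τ) 0 ≤ a * exp (-τ) * B := by gcongr
    have h₂ : b * exp (-τ / 2) * √(max (q τ) 0) ≤ b * exp (-τ / 2) * √B := by gcongr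
    linarith [hq' τ hτ]
  have hHt : H t ≤ 0 := by
    have : 0 ≤ a * B * exp (-t) + 2 * (b * √B) * exp (-t / 2) := by positivity
    linarith
  linarith

theorem stmt_12_general (a b τ₀ M G : ℝ) (ha : 0 ≤ a) (hb : 0 ≤ b)
    (hsmall : a * Real.exp (-τ₀) ≤ 1 / 2) :
    ∃ B : ℝ, ∀ (q q' g : ℝ → ℝ),
      (∀ τ ∈ Ici τ₀, HasDerivAt q (q' τ) τ) →
      (∀ τ ∈ Ici τ₀, 0 ≤ g τ) →
      IntegrableOn g (Ici τ₀) →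
      (∫ τ in Ici τ₀, g τ) ≤ G →
      max (q τ₀) 0 ≤ M →
      (∀ τ ∈ Ici τ₀,
        q' τ ≤ a * Real.exp (-τ) * max (q τ) 0
          + b * Real.exp (-τ / 2) * Real.sqrt (max (q τ) 0) + g τ) →
      ∀ τ ∈ Ici τ₀, q τ ≤ B := by
  set c := b * exp (-τ₀ / 2)
  set B := 4 * (M + 4 * c ^ 2 + G) + 1
  refine ⟨B, fun q q' g hq hg0 hg hgG hqM hq' => ?_⟩
  have hM : 0 ≤ M := (le_max_right _ _).trans hqM
  have hG : 0 ≤ G := (setIntegral_nonneg measurableSet_Ici hg0).trans hgG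
  have hB : 0 ≤ B := by positivity
  have hcont : ContinuousOn q (Ici τ₀) := fun τ hτ => (hq τ hτ).continuousAt.continuousWithinAt
  refine fun t ht => (hcont.bootstrap_lt (fun t ht hlt => ?_) t ht).le
  have hstep := le_of_deriv_le_of_le_on_Ico ha hb hB ht (fun τ hτ => hq τ hτ.1) hg0 hg
    (fun τ hτ => (hlt τ hτ).le) (fun τ hτ => hq' τ (le_of_lt hτ.1))
  have hlin : a * exp (-τ₀) * B ≤ 1 / 2 * B := by gcongr
  have hamgm : 2 * c * √B ≤ B / 4 + 4 * c ^ 2 := by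
    nlinarith [sq_nonneg (√B / 2 - 2 * c), sq_sqrt hB]
  linarith [(le_max_left _ _).trans hqM]

theorem stmt_12 (a b τ₀ M G : ℝ) (ha : 0 ≤ a) (hb : 0 ≤ b) (hG : 0 ≤ G)
    (hsmall : a * Real.exp (-τ₀) ≤ 1 / 2) :
    ∃ B : ℝ, ∀ (q q' g : ℝ → ℝ),
      (∀ τ ∈ Ici τ₀, HasDerivAt q (q' τ) τ) →
      (∀ τ ∈ Ici τ₀, 0 ≤ g τ) →
      IntegrableOn g (Ici τ₀) →
      (∫ τ in Ici τ₀, g τ) ≤ G →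
      max (q τ₀) 0 ≤ M →
      (∀ τ ∈ Ici τ₀,
        q' τ ≤ a * Real.exp (-τ) * max (q τ) 0
          + b * Real.exp (-τ / 2) * Real.sqrt (max (q τ) 0) + g τ) →
      ∀ τ ∈ Ici τ₀, q τ ≤ B :=
  stmt_12_general a b τ₀ M G ha hb hsmall
end

section
/- Let u : ℝ^n → ℝ be continuous and square-integrable, not identically zero, satisfying ∫_{ℝ^n} u^2 dx ≤ M ∫_{B_1} u^2 dx for some M ≥ 1. Let ε ∈ (0, 1/C] for C = C(n) sufficiently large, and set G_0(y, ε) = ε^{-n/2} e^{-|y|^2/(4ε)}. If λ > 0 is such that λ ∫_{ℝ^n} u(x+y)^2 G_0(y,ε) dy ≤ ∫_{ℝ^n} |∇u(x+y)|^2 G_0(y,ε) dy for all x in the ball B_2, then λ ≤ C' M ‖∇u‖_{L^2(ℝ^n)}^2 / ‖u‖_{L^2(ℝ^n)}^2 for a constant C' depending only on n. -/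
/-!
Integrate the hypothesis over `x ∈ B₂` and exchange the order of integration. On the right,
translation invariance bounds the result by `‖∇u‖₂² ∫ G₀ = (4π)^{n/2} ‖∇u‖₂²`. On the left,
keeping only `x + y ∈ B₁` and `y ∈ B₁` (which force `x ∈ B₂`) leaves at least
`(∫_{B₁} u²) ∫_{B₁} G₀`, and for `ε ≤ 1` the Gaussian mass on `B₁` is at least `e^{-1/4} |B₁|`
because `G₀ ≥ ε^{-n/2} e^{-1/4}` on `B_{√ε}`. The doubling hypothesis `∫ u² ≤ M ∫_{B₁} u²` converts this into the claimed bound.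
-/

open MeasureTheory Real Module Metric

open scoped ENNReal

section Convolution

variable {G : Type*} [MeasurableSpace G] [AddGroup G] [MeasurableAdd₂ G] {μ : Measure G}
  [SFinite μ] [μ.IsAddRightInvariant] {f g : G → ℝ≥0∞}

theorem lintegral_lintegral_add_mul (hf : Measurable f) (hg : Measurable g) :
    ∫⁻ x, ∫⁻ y, f (x + y) * g y ∂μ ∂μ = (∫⁻ x, f x ∂μ) * ∫⁻ y, g y ∂μ := by
  rw [lintegral_lintegral_swap ((hf.comp measurable_add).mul (hg.comp measurable_snd)).aemeasurable]
  have inner (y : G) : ∫⁻ x, f (x + y) * g y ∂μ = (∫⁻ x, f x ∂μ) * g y := by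
    rw [lintegral_mul_const _ (by fun_prop), lintegral_add_right_eq_self f y]
  simp_rw [inner]
  exact lintegral_const_mul _ hg

theorem lintegral_mul_le_setLIntegral_lintegral_add_mul {s t w : Set G} (hs : MeasurableSet s)
    (ht : MeasurableSet t) (hw : MeasurableSet w) (hsub : ∀ z ∈ t, ∀ y ∈ w, z - y ∈ s)
    (hf : Measurable f) (hg : Measurable g) :
    (∫⁻ z in t, f z ∂μ) * ∫⁻ y in w, g y ∂μ ≤ ∫⁻ x in s, ∫⁻ y, f (x + y) * g y ∂μ ∂μ := by
  rw [← lintegral_indicator ht, ← lintegral_indicator hw, ← lintegral_indicator hs,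
    ← lintegral_lintegral_add_mul (hf.indicator ht) (hg.indicator hw)]
  refine lintegral_mono fun x => ?_
  by_cases hx : x ∈ s
  · rw [Set.indicator_of_mem hx]
    exact lintegral_mono fun y =>
      mul_le_mul' (Set.indicator_le_self _ _ _) (Set.indicator_le_self _ _ _)
  · have hzero : ∀ y, t.indicator f (x + y) * w.indicator g y = 0 := by
      intro y
      by_cases hy : y ∈ w
      · rw [Set.indicator_of_notMem (fun hxy => hx (by simpa using hsub _ hxy y hy)), zero_mul]
      · rw [Set.indicator_of_notMem hy, mul_zero]
    simp [hzero]

end Convolution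

section GaussKernel

variable {V : Type*} [NormedAddCommGroup V] [InnerProductSpace ℝ V] {ε : ℝ}

variable (V) in
/-- The kernel `G₀(·, ε)` on a space of dimension `d = finrank ℝ V`. -/
noncomputable def gaussKernel (ε : ℝ) (y : V) : ℝ :=
  ε ^ (-(finrank ℝ V : ℝ) / 2) * exp (-‖y‖ ^ 2 / (4 * ε))

theorem gaussKernel_nonneg (hε : 0 ≤ ε) (y : V) : 0 ≤ gaussKernel V ε y :=
  mul_nonneg (rpow_nonneg hε _) (exp_pos _).le

theorem continuous_gaussKernel (ε : ℝ) : Continuous (gaussKernel V ε) := by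
  unfold gaussKernel
  fun_prop

theorem gaussKernel_le (hε : 0 ≤ ε) (y : V) :
    gaussKernel V ε y ≤ ε ^ (-(finrank ℝ V : ℝ) / 2) := by
  refine mul_le_of_le_one_right (rpow_nonneg hε _) (exp_le_one_iff.2 ?_)
  exact div_nonpos_of_nonpos_of_nonneg (neg_nonpos.2 (by positivity)) (by positivity)

variable [FiniteDimensional ℝ V] [MeasurableSpace V] [BorelSpace V]

theorem integral_gaussKernel (hε : 0 < ε) :
    ∫ y, gaussKernel V ε y = (4 * π) ^ (finrank ℝ V / 2 : ℝ) := by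
  have hexp (y : V) : exp (-‖y‖ ^ 2 / (4 * ε)) = exp (-(1 / (4 * ε)) * ‖y‖ ^ 2) := by
    congr 1; ring
  simp_rw [gaussKernel, hexp]
  rw [integral_const_mul, GaussianFourier.integral_rexp_neg_mul_sq_norm (by positivity),
    show π / (1 / (4 * ε)) = 4 * π * ε by field_simp, mul_rpow (by positivity) hε.le,
    mul_left_comm, ← rpow_add hε, neg_div, neg_add_cancel, rpow_zero, mul_one]

theorem integrable_gaussKernel (hε : 0 < ε) : Integrable (gaussKernel V ε) :=
  Integrable.of_integral_ne_zero (by rw [integral_gaussKernel hε]; positivity)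

theorem lintegral_gaussKernel (hε : 0 < ε) :
    ∫⁻ y, ENNReal.ofReal (gaussKernel V ε y)
      = ENNReal.ofReal ((4 * π) ^ (finrank ℝ V / 2 : ℝ)) := by
  rw [← integral_gaussKernel hε, ofReal_integral_eq_lintegral_ofReal (integrable_gaussKernel hε)
    (ae_of_all _ (gaussKernel_nonneg hε.le))]

theorem ofReal_exp_mul_volume_ball_le_setLIntegral_gaussKernel (hε : 0 < ε) (hε1 : ε ≤ 1) :
    ENNReal.ofReal (exp (-(1 / 4))) * volume (ball (0 : V) 1)
      ≤ ∫⁻ y in ball (0 : V) 1, ENNReal.ofReal (gaussKernel V ε y) := by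
  set c := ε ^ (-(finrank ℝ V : ℝ) / 2) * exp (-(1 / 4))
  have hlow : ∀ y ∈ ball (0 : V) √ε, ENNReal.ofReal c ≤ ENNReal.ofReal (gaussKernel V ε y) := by
    intro y hy
    refine ENNReal.ofReal_le_ofReal (mul_le_mul_of_nonneg_left (exp_le_exp.2 ?_) (by positivity))
    have hy : ‖y‖ ^ 2 < ε := (lt_sqrt (norm_nonneg y)).1 (mem_ball_zero_iff.1 hy)
    rw [neg_div, neg_le_neg_iff, div_le_iff₀ (by positivity)]
    linarith
  have hmass : ε ^ (-(finrank ℝ V : ℝ) / 2) * √ε ^ finrank ℝ V = 1 := by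
    rw [sqrt_eq_rpow, ← rpow_mul_natCast hε.le, ← rpow_add hε]
    ring_nf
    exact rpow_zero ε
  calc ENNReal.ofReal (exp (-(1 / 4))) * volume (ball (0 : V) 1)
      = ENNReal.ofReal c * volume (ball (0 : V) √ε) := by
        rw [Measure.addHaar_ball_of_pos _ _ (sqrt_pos.2 hε), ← mul_assoc,
          ← ENNReal.ofReal_mul (by positivity), mul_right_comm, hmass, one_mul]
    _ = ∫⁻ _ in ball (0 : V) √ε, ENNReal.ofReal c := (setLIntegral_const _ _).symm
    _ ≤ ∫⁻ y in ball (0 : V) √ε, ENNReal.ofReal (gaussKernel V ε y) :=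
        setLIntegral_mono' measurableSet_ball hlow
    _ ≤ ∫⁻ y in ball (0 : V) 1, ENNReal.ofReal (gaussKernel V ε y) :=
        lintegral_mono_set (ball_subset_ball (sqrt_le_one.2 hε1))

theorem lintegral_comp_add_mul_gaussKernel {φ : V → ℝ} (hφ0 : 0 ≤ φ) (hφ : Integrable φ)
    (hε : 0 < ε) (x : V) :
    ∫⁻ y, ENNReal.ofReal (φ (x + y)) * ENNReal.ofReal (gaussKernel V ε y)
      = ENNReal.ofReal (∫ y, φ (x + y) * gaussKernel V ε y) := by
  have hbound (y : V) : ‖gaussKernel V ε y‖ ≤ ε ^ (-(finrank ℝ V : ℝ) / 2) := by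
    rw [norm_of_nonneg (gaussKernel_nonneg hε.le y)]
    exact gaussKernel_le hε.le y
  rw [ofReal_integral_eq_lintegral_ofReal
    ((hφ.comp_add_left x).mul_bdd (continuous_gaussKernel ε).aestronglyMeasurable
      (ae_of_all _ hbound))
    (ae_of_all _ fun y => mul_nonneg (hφ0 _) (gaussKernel_nonneg hε.le y))]
  simp_rw [ENNReal.ofReal_mul (hφ0 _)]

end GaussKernel

section

variable {V : Type*} [NormedAddCommGroup V] [InnerProductSpace ℝ V] [FiniteDimensional ℝ V]
  [MeasurableSpace V] [BorelSpace V]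

theorem mul_setIntegral_ball_le_integral_of_gaussKernel_ineq {f h : V → ℝ} (hf0 : 0 ≤ f)
    (hh0 : 0 ≤ h) (hfm : Measurable f) (hhm : Measurable h) (hfi : Integrable f)
    (hhi : Integrable h) {ε lam : ℝ} (hε : 0 < ε) (hε1 : ε ≤ 1) (hlam : 0 ≤ lam)
    (H : ∀ x ∈ ball (0 : V) 2,
      lam * ∫ y, f (x + y) * gaussKernel V ε y ≤ ∫ y, h (x + y) * gaussKernel V ε y) :
    lam * ((∫ x in ball (0 : V) 1, f x) * (exp (-(1 / 4)) * volume.real (ball (0 : V) 1)))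
      ≤ (4 * π) ^ (finrank ℝ V / 2 : ℝ) * ∫ x, h x := by
  set K : V → ℝ≥0∞ := fun y => ENNReal.ofReal (gaussKernel V ε y)
  have hK : Measurable K := (continuous_gaussKernel ε).measurable.ennreal_ofReal
  have hpointwise : ∀ x ∈ ball (0 : V) 2,
      ENNReal.ofReal lam * ∫⁻ y, ENNReal.ofReal (f (x + y)) * K y
        ≤ ∫⁻ y, ENNReal.ofReal (h (x + y)) * K y := by
    intro x hx
    rw [lintegral_comp_add_mul_gaussKernel hf0 hfi hε,
      lintegral_comp_add_mul_gaussKernel hh0 hhi hε, ← ENNReal.ofReal_mul hlam]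
    exact ENNReal.ofReal_le_ofReal (H x hx)
  have hsub : ∀ z ∈ ball (0 : V) 1, ∀ y ∈ ball (0 : V) 1, z - y ∈ ball (0 : V) 2 := by
    intro z hz y hy
    rw [mem_ball_zero_iff] at *
    linarith [norm_sub_le z y]
  refine (ENNReal.ofReal_le_ofReal_iff (mul_nonneg (by positivity) (integral_nonneg hh0))).1 ?_
  calc ENNReal.ofReal
        (lam * ((∫ x in ball (0 : V) 1, f x) * (exp (-(1 / 4)) * volume.real (ball (0 : V) 1))))
      = ENNReal.ofReal lam * ((∫⁻ x in ball (0 : V) 1, ENNReal.ofReal (f x)) *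
          (ENNReal.ofReal (exp (-(1 / 4))) * volume (ball (0 : V) 1))) := by
        rw [ENNReal.ofReal_mul hlam, ENNReal.ofReal_mul (setIntegral_nonneg measurableSet_ball
          fun x _ => hf0 x), ENNReal.ofReal_mul (exp_pos _).le, measureReal_def,
          ENNReal.ofReal_toReal measure_ball_lt_top.ne,
          ofReal_integral_eq_lintegral_ofReal hfi.integrableOn (ae_of_all _ hf0)]
    _ ≤ ENNReal.ofReal lam * ((∫⁻ x in ball (0 : V) 1, ENNReal.ofReal (f x)) *
          ∫⁻ y in ball (0 : V) 1, K y) := by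
        gcongr
        exact ofReal_exp_mul_volume_ball_le_setLIntegral_gaussKernel hε hε1
    _ ≤ ENNReal.ofReal lam * ∫⁻ x in ball (0 : V) 2, ∫⁻ y, ENNReal.ofReal (f (x + y)) * K y := by
        gcongr
        exact lintegral_mul_le_setLIntegral_lintegral_add_mul measurableSet_ball measurableSet_ball
          measurableSet_ball hsub hfm.ennreal_ofReal hK
    _ = ∫⁻ x in ball (0 : V) 2, ENNReal.ofReal lam * ∫⁻ y, ENNReal.ofReal (f (x + y)) * K y :=
        (lintegral_const_mul' _ _ ENNReal.ofReal_ne_top).symm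
    _ ≤ ∫⁻ x in ball (0 : V) 2, ∫⁻ y, ENNReal.ofReal (h (x + y)) * K y :=
        setLIntegral_mono' measurableSet_ball hpointwise
    _ ≤ ∫⁻ x, ∫⁻ y, ENNReal.ofReal (h (x + y)) * K y := setLIntegral_le_lintegral _ _
    _ = (∫⁻ x, ENNReal.ofReal (h x)) * ∫⁻ y, K y :=
        lintegral_lintegral_add_mul hhm.ennreal_ofReal hK
    _ = ENNReal.ofReal ((4 * π) ^ (finrank ℝ V / 2 : ℝ) * ∫ x, h x) := by
        rw [lintegral_gaussKernel hε, ← ofReal_integral_eq_lintegral_ofReal hhi (ae_of_all _ hh0),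
          ← ENNReal.ofReal_mul (integral_nonneg hh0), mul_comm]

end

theorem stmt_18_general (n : ℕ) :
    ∃ C : ℝ, 0 < C ∧ ∃ C' : ℝ, 0 < C' ∧
      ∀ (u : EuclideanSpace ℝ (Fin n) → ℝ), ContDiff ℝ 1 u → (∃ x, u x ≠ 0) →
        Integrable (fun x => u x ^ 2) →
        Integrable (fun x => ‖gradient u x‖ ^ 2) →
        ∀ M : ℝ, 1 ≤ M →
          (∫ x : EuclideanSpace ℝ (Fin n), u x ^ 2)
            ≤ M * ∫ x in Metric.ball (0 : EuclideanSpace ℝ (Fin n)) 1, u x ^ 2 →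
        ∀ ε : ℝ, 0 < ε → ε ≤ 1 / C →
        ∀ lam : ℝ, 0 < lam →
          (∀ x ∈ Metric.ball (0 : EuclideanSpace ℝ (Fin n)) 2,
            lam * ∫ y : EuclideanSpace ℝ (Fin n),
                u (x + y) ^ 2 * (ε ^ (-(n : ℝ) / 2) * Real.exp (-‖y‖ ^ 2 / (4 * ε)))
              ≤ ∫ y : EuclideanSpace ℝ (Fin n),
                  ‖gradient u (x + y)‖ ^ 2 *
                    (ε ^ (-(n : ℝ) / 2) * Real.exp (-‖y‖ ^ 2 / (4 * ε)))) →
          lam ≤ C' * M * (∫ x : EuclideanSpace ℝ (Fin n), ‖gradient u x‖ ^ 2)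
            / (∫ x : EuclideanSpace ℝ (Fin n), u x ^ 2) := by
  set κ := exp (-(1 / 4)) * volume.real (ball (0 : EuclideanSpace ℝ (Fin n)) 1)
  have hκ : 0 < κ := mul_pos (exp_pos _)
    (ENNReal.toReal_pos (measure_ball_pos volume 0 one_pos).ne' measure_ball_lt_top.ne)
  refine ⟨1, one_pos, (4 * π) ^ ((n : ℝ) / 2) / κ, by positivity, ?_⟩
  rintro u hu ⟨x₀, hx₀⟩ hu2 hgrad2 M hM hdoub ε hε hε1 lam hlam H
  have hS : 0 < ∫ x, u x ^ 2 := integral_pos_of_integrable_nonneg_nonzero (hu.continuous.pow 2)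
    hu2 (fun x => sq_nonneg _) (pow_ne_zero 2 hx₀)
  have key := mul_setIntegral_ball_le_integral_of_gaussKernel_ineq (fun x => sq_nonneg (u x))
    (fun x => sq_nonneg ‖gradient u x‖)
    (hu.continuous.pow 2).measurable (by unfold gradient; fun_prop) hu2 hgrad2
    hε (by simpa using hε1) hlam.le (by simpa only [gaussKernel, finrank_euclideanSpace_fin])
  rw [finrank_euclideanSpace_fin] at key
  rw [le_div_iff₀ hS]
  calc lam * ∫ x, u x ^ 2 ≤ lam * (M * ∫ x in ball 0 1, u x ^ 2) := by gcongr
    _ = M * (lam * ((∫ x in ball 0 1, u x ^ 2) * κ)) / κ := by field_simp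
    _ ≤ M * ((4 * π) ^ ((n : ℝ) / 2) * ∫ x, ‖gradient u x‖ ^ 2) / κ := by gcongr
    _ = (4 * π) ^ ((n : ℝ) / 2) / κ * M * ∫ x, ‖gradient u x‖ ^ 2 := by ring

theorem stmt_18 (n : ℕ) (hn : 1 ≤ n) :
    ∃ C : ℝ, 0 < C ∧ ∃ C' : ℝ, 0 < C' ∧
      ∀ (u : EuclideanSpace ℝ (Fin n) → ℝ), ContDiff ℝ 1 u → (∃ x, u x ≠ 0) →
        Integrable (fun x => u x ^ 2) →
        Integrable (fun x => ‖gradient u x‖ ^ 2) →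
        ∀ M : ℝ, 1 ≤ M →
          (∫ x : EuclideanSpace ℝ (Fin n), u x ^ 2)
            ≤ M * ∫ x in Metric.ball (0 : EuclideanSpace ℝ (Fin n)) 1, u x ^ 2 →
        ∀ ε : ℝ, 0 < ε → ε ≤ 1 / C →
        ∀ lam : ℝ, 0 < lam →
          (∀ x ∈ Metric.ball (0 : EuclideanSpace ℝ (Fin n)) 2,
            lam * ∫ y : EuclideanSpace ℝ (Fin n),
                u (x + y) ^ 2 * (ε ^ (-(n : ℝ) / 2) * Real.exp (-‖y‖ ^ 2 / (4 * ε)))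
              ≤ ∫ y : EuclideanSpace ℝ (Fin n),
                  ‖gradient u (x + y)‖ ^ 2 *
                    (ε ^ (-(n : ℝ) / 2) * Real.exp (-‖y‖ ^ 2 / (4 * ε)))) →
          lam ≤ C' * M * (∫ x : EuclideanSpace ℝ (Fin n), ‖gradient u x‖ ^ 2)
            / (∫ x : EuclideanSpace ℝ (Fin n), u x ^ 2) :=
  stmt_18_general n
end
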